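/- Let H be a Hopf algebra, A a dynamical associative algebra in the category of right H*-comodules with multiplications ∗_λ satisfying (a ∗_{λ⁽²⁾} b) ∗_{λ⁽¹⁾} c = a⁽⁰⁾ ∗_{λ⁽¹⁾} (b ∗_{λ⁽²⁾a⁽¹⁾} c). Let λ ∈ H* be group-like and let α : H → k be an algebra character, giving the one-dimensional right H-module k_α. Let A^{k_α} = {a ∈ A : h ▷ a = α⁻¹(h) a for all h}, where α⁻¹ is the inverse of α in H*. Then for a ∈ A^{k_α} and b, c ∈ A one has (a ∗_λ b) ∗_λ c = a ∗_λ (b ∗_{λα⁻¹} c). Consequently: (i) ∗_λ makes A^H an associative algebra A^H_λ; (ii) A is a left A^H_λ-module; (iii) A^{k_α} is a right module over A^H_{λα⁻¹} and a left module over A^H_λ, and the actions commute: x ∗_λ (s ∗_λ y) = (x ∗_λ s) ∗_λ y for x ∈ A^H_λ, s ∈ A^{k_α}, y ∈ A^H_{λα⁻¹}. -/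
import Mathlib


/-!
STATEMENT 11: Setting of Statement 10 (a dynamical associative algebra `A` in the
category of right `H*`-comodules, `H*` modelled by an abstract Hopf algebra `K`).
Let `λ ∈ K` be group-like and `α` a character of `H`, i.e. a group-like element of
`K` (with inverse `α⁻¹`).  Let `A^{k_α} = {a : δ(a) = a ⊗ α⁻¹}` and let
`A^H = {a : δ(a) = a ⊗ 1}` be the invariants.  Then for `a ∈ A^{k_α}`, `b, c ∈ A`,
`(a ∗_λ b) ∗_λ c = a ∗_λ (b ∗_{λα⁻¹} c)`.  Consequently (i) `∗_λ` makes `A^H` an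
associative algebra `A^H_λ`, (ii) `A` is a left `A^H_λ`-module, and (iii) `A^{k_α}`
is a left `A^H_λ`-module and a right `A^H_{λα⁻¹}`-module, with commuting actions.
-/

open TensorProduct LinearMap

noncomputable section

variable (k : Type*) [Field k]
variable (K : Type*) [Ring K] [HopfAlgebra k K]
variable (A : Type*) [AddCommGroup A] [Module k A]

def coadK : K →ₗ[k] K ⊗[k] K :=
  (LinearMap.lTensor K ((LinearMap.mul' k K) ∘ₗ
      (LinearMap.rTensor K (HopfAlgebra.antipode (R := k))))) ∘ₗ
    (TensorProduct.assoc k K K K).toLinearMap ∘ₗ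
    (LinearMap.rTensor K (TensorProduct.comm k K K).toLinearMap) ∘ₗ
    (LinearMap.rTensor K (Coalgebra.comul (R := k))) ∘ₗ
    (Coalgebra.comul (R := k))

variable {K A}

def coactAA (δA : A →ₗ[k] A ⊗[k] K) : (A ⊗[k] A) →ₗ[k] (A ⊗[k] A) ⊗[k] K :=
  (LinearMap.lTensor (A ⊗[k] A) (LinearMap.mul' k K)) ∘ₗ
    (TensorProduct.tensorTensorTensorComm k A K A K).toLinearMap ∘ₗ
    (TensorProduct.map δA δA)

def coactKAA (δA : A →ₗ[k] A ⊗[k] K) :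
    K ⊗[k] (A ⊗[k] A) →ₗ[k] (K ⊗[k] (A ⊗[k] A)) ⊗[k] K :=
  (LinearMap.lTensor (K ⊗[k] (A ⊗[k] A)) (LinearMap.mul' k K)) ∘ₗ
    (TensorProduct.tensorTensorTensorComm k K K (A ⊗[k] A) K).toLinearMap ∘ₗ
    (TensorProduct.map (coadK k K) (coactAA k δA))

def shAssocL (Λ : K ⊗[k] (A ⊗[k] A) →ₗ[k] A) :
    K ⊗[k] ((A ⊗[k] A) ⊗[k] A) →ₗ[k] A :=
  Λ ∘ₗ
    (LinearMap.lTensor K ((TensorProduct.map Λ (LinearMap.id : A →ₗ[k] A)) ∘ₗ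
      (TensorProduct.assoc k K (A ⊗[k] A) A).symm.toLinearMap)) ∘ₗ
    (TensorProduct.assoc k K K ((A ⊗[k] A) ⊗[k] A)).toLinearMap ∘ₗ
    (LinearMap.rTensor ((A ⊗[k] A) ⊗[k] A) (Coalgebra.comul (R := k)))

def shAssocR (δA : A →ₗ[k] A ⊗[k] K) (Λ : K ⊗[k] (A ⊗[k] A) →ₗ[k] A) :
    K ⊗[k] ((A ⊗[k] A) ⊗[k] A) →ₗ[k] A :=
  Λ ∘ₗ (TensorProduct.assoc k K A A).toLinearMap ∘ₗ
    (LinearMap.lTensor (K ⊗[k] A) Λ) ∘ₗ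
    (TensorProduct.assoc k (K ⊗[k] A) K (A ⊗[k] A)).toLinearMap ∘ₗ
    (LinearMap.rTensor (A ⊗[k] A) (LinearMap.lTensor (K ⊗[k] A) (LinearMap.mul' k K))) ∘ₗ
    (LinearMap.rTensor (A ⊗[k] A) (TensorProduct.tensorTensorTensorComm k K K A K).toLinearMap) ∘ₗ
    (TensorProduct.assoc k (K ⊗[k] K) (A ⊗[k] K) (A ⊗[k] A)).symm.toLinearMap ∘ₗ
    (TensorProduct.map (Coalgebra.comul (R := k))
      (TensorProduct.map δA (LinearMap.id : A ⊗[k] A →ₗ[k] A ⊗[k] A))) ∘ₗ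
    (LinearMap.lTensor K (TensorProduct.assoc k A A A).toLinearMap)

lemma lemB_aux (δA : A →ₗ[k] A ⊗[k] K) (Λ : K ⊗[k] (A ⊗[k] A) →ₗ[k] A)
    (hshift : shAssocL k Λ = shAssocR k δA Λ)
    (lam : K) (hlam : Coalgebra.comul (R := k) lam = lam ⊗ₜ[k] lam)
    (a : A) (mu : K) (ha : δA a = a ⊗ₜ[k] mu) (b c : A) :
    Λ (lam ⊗ₜ[k] ((Λ (lam ⊗ₜ[k] (a ⊗ₜ[k] b))) ⊗ₜ[k] c))
      = Λ (lam ⊗ₜ[k] (a ⊗ₜ[k] (Λ ((lam * mu) ⊗ₜ[k] (b ⊗ₜ[k] c))))) := by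
  have := LinearMap.congr_fun hshift (lam ⊗ₜ[k] ((a ⊗ₜ[k] b) ⊗ₜ[k] c))
  simpa [shAssocL, shAssocR, hlam, ha, tensorTensorTensorComm_tmul, mul'_apply] using this

lemma lemA_aux (δA : A →ₗ[k] A ⊗[k] K) (Λ : K ⊗[k] (A ⊗[k] A) →ₗ[k] A)
    (Λ_equiv : δA ∘ₗ Λ = (LinearMap.rTensor K Λ) ∘ₗ (coactKAA k δA))
    (lam : K) (hlam : Coalgebra.comul (R := k) lam = lam ⊗ₜ[k] lam)
    (hlam' : Coalgebra.counit (R := k) lam = 1)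
    (a b : A) (mua mub : K) (ha : δA a = a ⊗ₜ[k] mua) (hb : δA b = b ⊗ₜ[k] mub) :
    δA (Λ (lam ⊗ₜ[k] (a ⊗ₜ[k] b))) = (Λ (lam ⊗ₜ[k] (a ⊗ₜ[k] b))) ⊗ₜ[k] (mua * mub) := by
  have := LinearMap.congr_fun Λ_equiv (lam ⊗ₜ[k] (a ⊗ₜ[k] b))
  have hS : HopfAlgebra.antipode (R := k) lam * lam = 1 := by
    have := HopfAlgebra.mul_antipode_rTensor_comul_apply (R := k) lam
    rw [hlam, hlam'] at this
    simpa using this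
  simpa [coactKAA, coadK, coactAA, hlam, ha, hb, tensorTensorTensorComm_tmul,
    mul'_apply, hS] using this

theorem statement11
    (δA : A →ₗ[k] A ⊗[k] K)
    (coassoc : (LinearMap.lTensor A (Coalgebra.comul (R := k))) ∘ₗ δA
      = (TensorProduct.assoc k A K K).toLinearMap ∘ₗ (LinearMap.rTensor K δA) ∘ₗ δA)
    (counital : (TensorProduct.rid k A).toLinearMap ∘ₗ
      (LinearMap.lTensor A (Coalgebra.counit (R := k))) ∘ₗ δA = LinearMap.id)
    (Λ : K ⊗[k] (A ⊗[k] A) →ₗ[k] A)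
    (Λ_equiv : δA ∘ₗ Λ = (LinearMap.rTensor K Λ) ∘ₗ (coactKAA k δA))
    (hshift : shAssocL k Λ = shAssocR k δA Λ)
    -- `λ` group-like:
    (lam : K) (hlam : Coalgebra.comul (R := k) lam = lam ⊗ₜ[k] lam)
    (hlam' : Coalgebra.counit (R := k) lam = 1)
    -- `α` a character of `H`, i.e. a group-like element of `K`, with inverse `α⁻¹`:
    (alpha alphaInv : K)
    (halpha : Coalgebra.comul (R := k) alpha = alpha ⊗ₜ[k] alpha)
    (halpha' : Coalgebra.counit (R := k) alpha = 1)
    (hinv : alpha * alphaInv = 1 ∧ alphaInv * alpha = 1)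
    (hInvGrouplike : Coalgebra.comul (R := k) alphaInv = alphaInv ⊗ₜ[k] alphaInv) :
    -- main identity: for `a ∈ A^{k_α}` and `b, c ∈ A`,
    -- `(a ∗_λ b) ∗_λ c = a ∗_λ (b ∗_{λα⁻¹} c)`:
    (∀ a : A, δA a = a ⊗ₜ[k] alphaInv → ∀ b c : A,
      Λ (lam ⊗ₜ[k] ((Λ (lam ⊗ₜ[k] (a ⊗ₜ[k] b))) ⊗ₜ[k] c))
        = Λ (lam ⊗ₜ[k] (a ⊗ₜ[k] (Λ ((lam * alphaInv) ⊗ₜ[k] (b ⊗ₜ[k] c)))))) ∧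
    -- (i) `∗_λ` makes `A^H` an associative algebra:
    (∀ a b : A, δA a = a ⊗ₜ[k] 1 → δA b = b ⊗ₜ[k] 1 →
      δA (Λ (lam ⊗ₜ[k] (a ⊗ₜ[k] b))) = (Λ (lam ⊗ₜ[k] (a ⊗ₜ[k] b))) ⊗ₜ[k] 1) ∧
    (∀ a b c : A, δA a = a ⊗ₜ[k] 1 → δA b = b ⊗ₜ[k] 1 → δA c = c ⊗ₜ[k] 1 →
      Λ (lam ⊗ₜ[k] ((Λ (lam ⊗ₜ[k] (a ⊗ₜ[k] b))) ⊗ₜ[k] c))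
        = Λ (lam ⊗ₜ[k] (a ⊗ₜ[k] (Λ (lam ⊗ₜ[k] (b ⊗ₜ[k] c)))))) ∧
    -- (ii) `A` is a left `A^H_λ`-module:
    (∀ x y : A, δA x = x ⊗ₜ[k] 1 → δA y = y ⊗ₜ[k] 1 → ∀ b : A,
      Λ (lam ⊗ₜ[k] (x ⊗ₜ[k] (Λ (lam ⊗ₜ[k] (y ⊗ₜ[k] b)))))
        = Λ (lam ⊗ₜ[k] ((Λ (lam ⊗ₜ[k] (x ⊗ₜ[k] y))) ⊗ₜ[k] b))) ∧
    -- (iii) `A^{k_α}` is a right `A^H_{λα⁻¹}`-module: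
    (∀ s : A, δA s = s ⊗ₜ[k] alphaInv →
      (∀ y : A, δA y = y ⊗ₜ[k] 1 →
        δA (Λ (lam ⊗ₜ[k] (s ⊗ₜ[k] y))) = (Λ (lam ⊗ₜ[k] (s ⊗ₜ[k] y))) ⊗ₜ[k] alphaInv) ∧
      (∀ y z : A, δA y = y ⊗ₜ[k] 1 → δA z = z ⊗ₜ[k] 1 →
        Λ (lam ⊗ₜ[k] ((Λ (lam ⊗ₜ[k] (s ⊗ₜ[k] y))) ⊗ₜ[k] z))
          = Λ (lam ⊗ₜ[k] (s ⊗ₜ[k] (Λ ((lam * alphaInv) ⊗ₜ[k] (y ⊗ₜ[k] z))))))) ∧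
    -- (iii') the left and right actions on `A^{k_α}` commute:
    (∀ x s y : A, δA x = x ⊗ₜ[k] 1 → δA s = s ⊗ₜ[k] alphaInv → δA y = y ⊗ₜ[k] 1 →
      Λ (lam ⊗ₜ[k] (x ⊗ₜ[k] (Λ (lam ⊗ₜ[k] (s ⊗ₜ[k] y)))))
        = Λ (lam ⊗ₜ[k] ((Λ (lam ⊗ₜ[k] (x ⊗ₜ[k] s))) ⊗ₜ[k] y))) := by
  refine ⟨fun a ha b c => lemB_aux k δA Λ hshift lam hlam a alphaInv ha b c,
    fun a b ha hb => by
      simpa using lemA_aux k δA Λ Λ_equiv lam hlam hlam' a b 1 1 ha hb,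
    fun a b c ha hb hc => by
      simpa using lemB_aux k δA Λ hshift lam hlam a 1 ha b c,
    fun x y hx hy b => by
      have := lemB_aux k δA Λ hshift lam hlam x 1 hx y b
      rw [mul_one] at this
      exact this.symm,
    fun s hs => ⟨fun y hy => by
        simpa [mul_one] using lemA_aux k δA Λ Λ_equiv lam hlam hlam' s y alphaInv 1 hs hy,
      fun y z hy hz => lemB_aux k δA Λ hshift lam hlam s alphaInv hs y z⟩,
    fun x s y hx hs hy => by
      have := lemB_aux k δA Λ hshift lam hlam x 1 hx s y
      rw [mul_one] at this
      exact this.symm⟩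

end
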